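/- arXiv:1401.4813 — 8 statements merged into one kernel-verified Lean document; each statement's English description precedes it below -/
import Mathlib

section
/- Let O₁ ⊆ O₂ be valuation rings of a field K, and let 𝔬 = O₁/M₂ be the induced valuation ring on the residue field k = O₂/M₂. Then O₁ is henselian if and only if both O₂ is henselian and 𝔬 is henselian. -/
/-!
The reduction `O₁ → 𝔬`, `x ↦ x mod M₂`, is surjective, so henselianity passes from `O₁` to `𝔬`.
Conversely, if `O₂` and `𝔬` are henselian, a simple residual root of a monic `f ∈ O₁[X]` lifts
first to a root in `𝔬` and then to a root in `O₂`; its residue lies in `𝔬`, so it lies in `O₁`.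

For the coarsening, let `f ∈ O₂[X]`, `f(a₀) ∈ M₂` and `u = f'(a₀)` a unit, and put
`c = f(a₀)/u ∈ M₂`. Taylor expansion gives `f(a₀ + c s) = f(a₀) (1 + s + s² q(s))` where all
coefficients of `q` are multiples of `c/u`, hence lie in `M₂ ⊆ M₁ ⊆ O₁`. Reversing
`1 + X + X² q ≡ 1 + X` gives a monic polynomial over `O₁` with the simple residual root `-1`,
so `1 + X + X² q` has a root `s` in `O₁`, and `a₀ + c s` is a root of `f` congruent to `a₀`.
-/

open Polynomial IsLocalRing

universe u

theorem HenselianLocalRing.of_surjective {R S : Type u} [CommRing R] [CommRing S]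
    [HenselianLocalRing R] [IsLocalRing S] (φ : R →+* S) (hφ : Function.Surjective φ) :
    HenselianLocalRing S := by
  refine ((HenselianLocalRing.TFAE S).out 0 1).mpr fun g hg b₀ hroot hsimple => ?_
  obtain ⟨f, rfl, -, hf⟩ :=
    lifts_and_degree_eq_and_monic ((lifts_iff_coeff_lifts g).2 fun n => hφ _) hg
  rw [aeval_def, ResidueField.algebraMap_eq, eval₂_map] at hroot
  rw [aeval_def, ResidueField.algebraMap_eq, derivative_map, eval₂_map] at hsimple
  have H := ((HenselianLocalRing.TFAE R).out 0 2).mp ‹HenselianLocalRing R›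
  obtain ⟨a, ha, rfl⟩ := H ((residue S).comp φ) (residue_surjective.comp hφ) f hf b₀ hroot hsimple
  exact ⟨φ a, by rw [IsRoot, eval_map_apply, ha.eq_zero, map_zero], rfl⟩

theorem HenselianLocalRing.exists_one_add_self_add_sq_mul_eval_eq_zero {R : Type*} [CommRing R]
    [HenselianLocalRing R] (q : R[X]) (hq : q.map (residue R) = 0) :
    ∃ s : R, 1 + s + s ^ 2 * q.eval s = 0 ∧ residue R s = -1 := by
  obtain ⟨n, hn⟩ : ∃ n, q.natDegree = n := ⟨_, rfl⟩
  have hdeg : (X ^ (n + 1) + q.reflect n).degree < ↑(n + 2) := by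
    refine (degree_add_le _ _).trans_lt (max_lt ?_ ?_)
    · rw [degree_X_pow]
      exact_mod_cast (by omega : n + 1 < n + 2)
    · refine degree_le_natDegree.trans_lt ?_
      have := natDegree_reflect_le (N := n) (p := q)
      rw [hn, max_self] at this
      exact_mod_cast (by omega : (q.reflect n).natDegree < n + 2)
  have H := ((HenselianLocalRing.TFAE R).out 0 1).mp ‹HenselianLocalRing R›
  obtain ⟨t, ht, htres⟩ := H _ (monic_X_pow_add hdeg) (-1)
    (by simp [aeval_def, ← eval_map, ← reflect_map, hq, pow_succ])
    (by simp [aeval_def, ← eval_map, ← derivative_map, ← reflect_map, hq, pow_succ]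
        ring_nf
        simp)
  obtain ⟨s, hts⟩ := ((residue_ne_zero_iff_isUnit t).mp (by simp [htres])).exists_right_inv
  refine ⟨s, ?_, ?_⟩
  · let _ := invertibleOfLeftInverse s t hts
    have hreflect := eval₂_reflect_mul_pow (RingHom.id R) s n q hn.le
    simp only [eval₂_id] at hreflect
    change eval t (reflect n q) * s ^ n = eval s q at hreflect
    have hG := ht.eq_zero
    simp only [eval_add, eval_pow, eval_X] at hG
    have hpow : (t * s) ^ (n + 1) = 1 := by rw [hts, one_pow]
    linear_combination s ^ (n + 2) * hG - s ^ 2 * hreflect - (t * s + s) * hpow - hts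
  · have := congrArg (residue R) hts
    rw [map_mul, htres, map_one] at this
    linear_combination -this

theorem Polynomial.eval_add_eq_eval_add_derivative_mul_add_sq_mul {R : Type*} [CommRing R]
    (f : R[X]) (a d : R) :
    f.eval (a + d) =
      f.eval a + f.derivative.eval a * d + d ^ 2 * (taylor a f).divX.divX.eval d := by
  have h := congrArg (eval d) (taylor a f).divX.divX_mul_X_add
  have h' := congrArg (eval d) (taylor a f).divX_mul_X_add
  simp only [eval_add, eval_mul, eval_X, eval_C, coeff_divX, zero_add, taylor_coeff_one] at h h'
  rw [add_comm a, ← taylor_eval, ← h', ← h, taylor_coeff_zero]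
  ring

theorem Polynomial.isUnit_eval_of_sub_mem_maximalIdeal {R : Type*} [CommRing R] [IsLocalRing R]
    (p : R[X]) {a b : R} (hab : a - b ∈ maximalIdeal R) (hb : IsUnit (p.eval b)) :
    IsUnit (p.eval a) := by
  rw [← residue_ne_zero_iff_isUnit, ← eval_map_apply] at hb ⊢
  rwa [show residue R a = residue R b from Ideal.Quotient.eq.2 hab]

namespace ValuationSubring

variable {K : Type*} [Field K] {O₁ O₂ : ValuationSubring K} (h : O₁ ≤ O₂)
include h

theorem mem_of_mem_maximalIdeal_of_le {x : O₂} (hx : x ∈ maximalIdeal O₂) : (x : K) ∈ O₁ :=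
  nonunits_subset (nonunits_le_nonunits.2 h (coe_mem_nonunits_iff.2 hx))

theorem mem_maximalIdeal_of_inclusion_mem {x : O₁} (hx : inclusion O₁ O₂ h x ∈ maximalIdeal O₂) :
    x ∈ maximalIdeal O₁ :=
  coe_mem_nonunits_iff.1 (nonunits_le_nonunits.2 h (coe_mem_nonunits_iff.2 hx))

theorem exists_map_inclusion_eq_of_coeff_mem_maximalIdeal (p : O₂[X])
    (hp : ∀ i, p.coeff i ∈ maximalIdeal O₂) :
    ∃ q : O₁[X], q.map (inclusion O₁ O₂ h) = p ∧ q.map (residue O₁) = 0 := by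
  obtain ⟨q, rfl⟩ := (lifts_iff_coeff_lifts (f := inclusion O₁ O₂ h) p).2 fun i =>
    ⟨⟨_, mem_of_mem_maximalIdeal_of_le h (hp i)⟩, rfl⟩
  refine ⟨q, rfl, ?_⟩
  ext i
  rw [coeff_map, coeff_zero, residue_eq_zero_iff]
  exact mem_maximalIdeal_of_inclusion_mem h (by simpa using hp i)

theorem henselianLocalRing_of_le [HenselianLocalRing O₁] : HenselianLocalRing O₂ where
  is_henselian f _ a₀ hroot hsimple := by
    obtain ⟨w, hw⟩ := hsimple.exists_right_inv
    set c := f.eval a₀ * w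
    have hc : c ∈ maximalIdeal O₂ := Ideal.mul_mem_right _ _ hroot
    obtain ⟨q, hqp, hq⟩ := exists_map_inclusion_eq_of_coeff_mem_maximalIdeal h
      (C (w * c) * ((taylor a₀ f).divX.divX).comp (C c * X)) fun i => by
        rw [coeff_C_mul]
        exact Ideal.mul_mem_right _ _ (Ideal.mul_mem_left _ _ hc)
    obtain ⟨s, hs, -⟩ := HenselianLocalRing.exists_one_add_self_add_sq_mul_eval_eq_zero q hq
    have hs' := congrArg (inclusion O₁ O₂ h) hs
    rw [map_add, map_add, map_mul, map_pow, map_one, map_zero, ← eval_map_apply, hqp] at hs'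
    simp only [eval_mul, eval_C, eval_comp, eval_X] at hs'
    refine ⟨a₀ + c * inclusion O₁ O₂ h s, ?_, by simpa using Ideal.mul_mem_right _ _ hc⟩
    rw [IsRoot, eval_add_eq_eval_add_derivative_mul_add_sq_mul]
    linear_combination f.eval a₀ * hs' + f.eval a₀ * inclusion O₁ O₂ h s * hw

variable (𝔬 : ValuationSubring (ResidueField O₂))
  (h𝔬 : ∀ x : O₂, residue O₂ x ∈ 𝔬 ↔ (x : K) ∈ O₁)
include h𝔬

noncomputable def reduction : O₁ →+* 𝔬 :=
  ((residue O₂).comp (inclusion O₁ O₂ h)).codRestrict 𝔬 fun x => (h𝔬 _).2 x.2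

theorem reduction_surjective : Function.Surjective (reduction h 𝔬 h𝔬) := by
  rintro ⟨y, hy⟩
  obtain ⟨x, rfl⟩ := residue_surjective y
  exact ⟨⟨x, (h𝔬 x).1 hy⟩, rfl⟩

theorem henselianLocalRing_of_le_of_induced [HenselianLocalRing O₂] [HenselianLocalRing 𝔬] :
    HenselianLocalRing O₁ where
  is_henselian f hf a₀ hroot hsimple := by
    set φ := reduction h 𝔬 h𝔬
    have := IsLocalHom.of_surjective φ (reduction_surjective h 𝔬 h𝔬)
    obtain ⟨α, hα, hαa₀⟩ := HenselianLocalRing.is_henselian (f.map φ) (hf.map φ) (φ a₀)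
      (by rw [eval_map_apply, ← Ideal.mem_comap, maximalIdeal_comap]; exact hroot)
      (by rw [derivative_map, eval_map_apply]; exact hsimple.map φ)
    have haeval (p : O₁[X]) :
        aeval (α : ResidueField O₂) (p.map (inclusion O₁ O₂ h)) = ((p.map φ).eval α : 𝔬) := by
      rw [aeval_def, ResidueField.algebraMap_eq, eval₂_map, eval_map]
      exact (hom_eval₂ p φ 𝔬.subtype α).symm
    have H := ((HenselianLocalRing.TFAE O₂).out 0 1).mp ‹HenselianLocalRing O₂›
    obtain ⟨a, ha, haα⟩ := H (f.map (inclusion O₁ O₂ h)) (hf.map _) α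
      (by rw [haeval, hα.eq_zero, ZeroMemClass.coe_zero])
      (by
        rw [derivative_map, haeval, ← derivative_map, Ne, ZeroMemClass.coe_eq_zero]
        refine (isUnit_eval_of_sub_mem_maximalIdeal _ hαa₀ ?_).ne_zero
        rw [derivative_map, eval_map_apply]
        exact hsimple.map φ)
    obtain ⟨a, rfl⟩ : ∃ a' : O₁, inclusion O₁ O₂ h a' = a :=
      ⟨⟨a, (h𝔬 a).1 (haα ▸ α.2)⟩, rfl⟩
    have hφa : φ a = α := Subtype.ext haα
    refine ⟨a, ?_, ?_⟩
    · rw [IsRoot, eval_map_apply] at ha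
      exact (map_eq_zero_iff _ (Subring.inclusion_injective h)).1 ha
    · rw [← maximalIdeal_comap φ, Ideal.mem_comap, map_sub, hφa]
      exact hαa₀

end ValuationSubring

/-- Let `O₁ ⊆ O₂` be valuation rings of a field `K` and let `𝔬 = O₁/M₂` be the induced
valuation ring on the residue field `k = O₂/M₂` (characterized by: the residue of
`x ∈ O₂` lies in `𝔬` iff `x ∈ O₁`).  Then `O₁` is henselian if and only if both `O₂`
and `𝔬` are henselian. -/
theorem henselian_iff_coarsening_and_induced_henselian
    {K : Type*} [Field K] (O₁ O₂ : ValuationSubring K) (h : O₁ ≤ O₂)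
    (𝔬 : ValuationSubring (IsLocalRing.ResidueField O₂))
    (h𝔬 : ∀ x : O₂, IsLocalRing.residue O₂ x ∈ 𝔬 ↔ (x : K) ∈ O₁) :
    HenselianLocalRing O₁ ↔ (HenselianLocalRing O₂ ∧ HenselianLocalRing 𝔬) := by
  constructor
  · intro _
    exact ⟨ValuationSubring.henselianLocalRing_of_le h,
      HenselianLocalRing.of_surjective _ (ValuationSubring.reduction_surjective h 𝔬 h𝔬)⟩
  · rintro ⟨_, _⟩
    exact ValuationSubring.henselianLocalRing_of_le_of_induced h 𝔬 h𝔬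
end

section
/- If O₁ and O₂ are henselian valuation rings on a field K and at least one of their residue fields is not separably closed, then O₁ and O₂ are comparable, i.e., O₁ ⊆ O₂ or O₂ ⊆ O₁. -/
/-!
Suppose `O₁` and `O₂` are incomparable, `O₂` is henselian, and `p ∈ k₁[X]` is monic of degree
`n ≥ 2` without roots. Incomparability yields `t ∈ 𝔪₁ \ O₂` and lets one lift `p` to a monic
`f ∈ O₁[X]` with coefficients in `O₂`. As `p` has no roots and `O₁` is integrally closed,
`f + t^(n-1) X` takes no value in `𝔪₁`. But substituting `X = t Z` and dividing by `t^n`, the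
equation `f(x) + t^(n-1) x = t` becomes a monic equation over `O₂` that reduces to `Z^n + Z = 0`
modulo `𝔪₂`; Hensel's lemma lifts its simple root `0`, so `f + t^(n-1) X` takes the value `t`.
-/

open Polynomial IsLocalRing

theorem exists_monic_one_lt_natDegree_forall_eval_ne_zero_of_not_isSepClosed {k : Type*} [Field k]
    (h : ¬IsSepClosed k) : ∃ p : k[X], p.Monic ∧ 1 < p.natDegree ∧ ∀ x, p.eval x ≠ 0 := by
  obtain ⟨p, hp, hirr, -, hroot⟩ :
      ∃ p : k[X], p.Monic ∧ Irreducible p ∧ p.Separable ∧ ∀ x, p.eval x ≠ 0 := by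
    by_contra! H
    exact h (IsSepClosed.of_exists_root k H)
  refine ⟨p, hp, lt_of_le_of_ne hirr.natDegree_pos fun h1 ↦ ?_, hroot⟩
  obtain ⟨x, hx⟩ :=
    exists_root_of_degree_eq_one (by rw [degree_eq_natDegree hp.ne_zero, ← h1]; rfl)
  exact hroot x hx

theorem HenselianLocalRing.exists_eval_scaleRoots_add_eq {R : Type*} [CommRing R]
    [HenselianLocalRing R] {F : R[X]} (hF : F.Monic) (hn : 1 < F.natDegree) {u : R}
    (hu : u ∈ maximalIdeal R) :
    ∃ z, (F.scaleRoots u).eval z + z = u ^ (F.natDegree - 1) := by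
  -- modulo `𝔪` this polynomial is `X ^ n + X`, of which `0` is a simple root
  set g := F.scaleRoots u + (X - C (u ^ (F.natDegree - 1)))
  have hg : g.Monic := by
    refine ((monic_scaleRoots_iff u).2 hF).add_of_left ?_
    rw [degree_X_sub_C, degree_scaleRoots, degree_eq_natDegree hF.ne_zero]
    exact_mod_cast hn
  have hu' : residue R u = 0 := (residue_eq_zero_iff u).2 hu
  obtain ⟨z, hz, -⟩ := HenselianLocalRing.is_henselian g hg 0 (by
    rw [← coeff_zero_eq_eval_zero, ← residue_eq_zero_iff]
    simp only [g, coeff_add, coeff_sub, coeff_C_zero, coeff_X_zero, coeff_scaleRoots]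
    simp [hu', Nat.sub_ne_zero_of_lt hn, (zero_lt_one.trans hn).ne']) (by
    rw [← coeff_zero_eq_eval_zero, coeff_derivative, ← residue_ne_zero_iff_isUnit]
    simp only [g, zero_add, coeff_add, coeff_sub, coeff_C_succ, coeff_X_one, coeff_scaleRoots]
    simp [hu', Nat.sub_ne_zero_of_lt hn])
  exact ⟨z, by simpa [g, ← add_sub_assoc, sub_eq_zero] using hz⟩

namespace ValuationSubring

variable {K : Type*} [Field K]

theorem exists_mem_nonunits_notMem_of_not_le {O₁ O₂ : ValuationSubring K} (h₁₂ : ¬O₁ ≤ O₂)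
    (h₂₁ : ¬O₂ ≤ O₁) : ∃ t ∈ O₁.nonunits, t ∉ O₂ := by
  obtain ⟨a, ha₁, ha₂⟩ := SetLike.not_le_iff_exists.mp h₁₂
  obtain ⟨b, hb₂, hb₁⟩ := SetLike.not_le_iff_exists.mp h₂₁
  have hb₀ : b ≠ 0 := fun h ↦ hb₁ (h ▸ O₁.zero_mem)
  refine ⟨a * b⁻¹, ?_, fun hab ↦ ha₂ ?_⟩
  · have hb : O₁.valuation b⁻¹ < 1 := (inv_mem_nonunits_iff O₁).2 (Or.inr hb₁)
    rw [mem_nonunits_iff, map_mul]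
    exact (mul_le_of_le_one_left' ((O₁.valuation_le_one_iff a).2 ha₁)).trans_lt hb
  · simpa [hb₀] using O₂.mul_mem _ _ hab hb₂

theorem exists_residue_eq_and_mem {O₁ O₂ : ValuationSubring K} {t : K} (ht₁ : t ∈ O₁.nonunits)
    (ht₂ : t ∉ O₂) (c : ResidueField O₁) : ∃ a : O₁, residue O₁ a = c ∧ (a : K) ∈ O₂ := by
  obtain ⟨l, rfl⟩ := residue_surjective c
  by_cases hl : (l : K) ∈ O₂
  · exact ⟨l, rfl, hl⟩
  obtain ⟨htO₁, htm⟩ := mem_nonunits_iff_exists_mem_maximalIdeal.1 ht₁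
  set T : O₁ := ⟨t, htO₁⟩
  have hres : residue O₁ (1 + T * l) = 1 := by simp [(residue_eq_zero_iff T).2 htm]
  have hu : IsUnit (1 + T * l) := (residue_ne_zero_iff_isUnit _).1 (by simp [hres])
  obtain ⟨a, ha⟩ : ∃ a : O₁, a * (1 + T * l) = l := ⟨l * ↑hu.unit⁻¹, by simp [mul_assoc]⟩
  refine ⟨a, by simpa [hres] using congrArg (residue O₁) ha, ?_⟩
  -- `a = l / (1 + t l)` has the residue of `l`, and `a⁻¹ = t + l⁻¹` with `l⁻¹ ∈ O₂`, `t ∉ O₂`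
  have hl₀ : (l : K) ≠ 0 := fun h ↦ hl (h ▸ O₂.zero_mem)
  have haK : (a : K) * (1 + t * l) = l := congrArg Subtype.val ha
  have ha₀ : (a : K) ≠ 0 := by rintro h; simp [h, eq_comm, hl₀] at haK
  refine (O₂.mem_or_inv_mem a).resolve_right fun hinv ↦ ht₂ ?_
  have ht : t = (a : K)⁻¹ - (l : K)⁻¹ := by
    field_simp
    linear_combination haK
  exact ht ▸ O₂.sub_mem hinv ((O₂.mem_or_inv_mem l).resolve_left hl)

theorem exists_monic_map_residue_eq {O₁ O₂ : ValuationSubring K} {t : K}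
    (ht₁ : t ∈ O₁.nonunits) (ht₂ : t ∉ O₂) {p : (ResidueField O₁)[X]} (hp : p.Monic) :
    ∃ f : O₁[X], f.Monic ∧ f.natDegree = p.natDegree ∧ f.map (residue O₁) = p ∧
      ∀ i, (f.coeff i : K) ∈ O₂ := by
  let S : Subring O₁ := O₂.toSubring.comap (algebraMap O₁ K)
  have hsurj : Function.Surjective ((residue O₁).comp S.subtype) := fun c ↦
    let ⟨a, ha, haO₂⟩ := exists_residue_eq_and_mem ht₁ ht₂ c
    ⟨⟨a, haO₂⟩, ha⟩
  obtain ⟨q, hq, hdeg, hq₁⟩ :=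
    lifts_and_natDegree_eq_and_monic ((mem_lifts p).2 (map_surjective _ hsurj p)) hp
  refine ⟨q.map S.subtype, hq₁.map _, by rw [hq₁.natDegree_map, hdeg], by rwa [map_map],
    fun i ↦ ?_⟩
  rw [coeff_map]
  exact (q.coeff i).2

theorem notMem_nonunits_aeval {O : ValuationSubring K} {f : O[X]} (hf : f.Monic)
    (hdeg : f.natDegree ≠ 0) (hroot : ∀ y, (f.map (residue O)).eval y ≠ 0) (x : K) :
    aeval x f ∉ O.nonunits := by
  intro hx
  obtain ⟨hxO, hxm⟩ := mem_nonunits_iff_exists_mem_maximalIdeal.1 hx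
  have hint : IsIntegral O x :=
    .of_aeval_monic hf hdeg (isIntegral_algebraMap (x := (⟨_, hxO⟩ : O)))
  obtain ⟨y, rfl⟩ := IsIntegrallyClosed.isIntegral_iff.1 hint
  apply hroot (residue O y)
  rw [eval_map_apply, residue_eq_zero_iff]
  convert hxm
  exact (aeval_algebraMap_apply_eq_algebraMap_eval y f).symm

theorem exists_eval_add_pow_mul_eq {O : ValuationSubring K} [HenselianLocalRing O] {F : K[X]}
    (hF : F.Monic) (hn : 1 < F.natDegree) (hFO : ∀ i, F.coeff i ∈ O) {t : K} (ht : t ∉ O) :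
    ∃ x, F.eval x + t ^ (F.natDegree - 1) * x = t := by
  obtain ⟨F₀, hF₀F, hdeg, hF₀⟩ := lifts_and_natDegree_eq_and_monic
    ((lifts_iff_coeff_lifts (f := algebraMap O K) F).2 fun i ↦ ⟨⟨_, hFO i⟩, rfl⟩) hF
  have ht₀ : t ≠ 0 := fun h ↦ ht (h ▸ O.zero_mem)
  obtain ⟨hu, hum⟩ :=
    mem_nonunits_iff_exists_mem_maximalIdeal.1 ((inv_mem_nonunits_iff O).2 (Or.inr ht))
  obtain ⟨z, hz⟩ := HenselianLocalRing.exists_eval_scaleRoots_add_eq hF₀ (hdeg ▸ hn) hum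
  -- `z` solves the equation for `t * z` scaled by `t⁻¹ ∈ 𝔪`
  refine ⟨t * z, ?_⟩
  have key := congrArg (algebraMap O K) hz
  rw [map_add, map_pow, ← eval_map_apply, map_scaleRoots _ _ _ (by simp [hF₀]), hF₀F, hdeg]
    at key
  change eval (z : K) (F.scaleRoots t⁻¹) + z = t⁻¹ ^ (F.natDegree - 1) at key
  rw [show (z : K) = t⁻¹ * (t * z) by field_simp, scaleRoots_eval_mul] at key
  obtain ⟨m, hm⟩ : ∃ m, F.natDegree = m + 1 := ⟨_, (Nat.succ_pred_eq_of_pos (by omega)).symm⟩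
  rw [hm, Nat.add_sub_cancel] at key ⊢
  rw [inv_pow, inv_pow] at key
  field_simp at key
  refine mul_right_cancel₀ (pow_ne_zero m ht₀) ?_
  linear_combination key

theorem le_or_le_of_not_isSepClosed {O₁ O₂ : ValuationSubring K} [HenselianLocalRing O₂]
    (hres : ¬IsSepClosed (ResidueField O₁)) : O₁ ≤ O₂ ∨ O₂ ≤ O₁ := by
  by_contra! h
  obtain ⟨t, ht₁, ht₂⟩ := exists_mem_nonunits_notMem_of_not_le h.1 h.2
  obtain ⟨p, hp, hpdeg, hroot⟩ :=
    exists_monic_one_lt_natDegree_forall_eval_ne_zero_of_not_isSepClosed hres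
  obtain ⟨f, hf, hfdeg, hfp, hfO₂⟩ := exists_monic_map_residue_eq ht₁ ht₂ hp
  obtain ⟨x, hx⟩ := exists_eval_add_pow_mul_eq (hf.map (algebraMap O₁ K))
    (by rwa [hf.natDegree_map, hfdeg]) (fun i ↦ by rw [coeff_map]; exact hfO₂ i) ht₂
  rw [hf.natDegree_map, eval_map_algebraMap] at hx
  obtain ⟨htO₁, htm⟩ := mem_nonunits_iff_exists_mem_maximalIdeal.1 ht₁
  set T : O₁ := ⟨t, htO₁⟩
  have hdeg : (C (T ^ (f.natDegree - 1)) * X).degree < f.degree := by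
    refine (degree_C_mul_X_le _).trans_lt ?_
    rw [degree_eq_natDegree hf.ne_zero]
    exact_mod_cast hfdeg ▸ hpdeg
  refine notMem_nonunits_aeval (f := f + C (T ^ (f.natDegree - 1)) * X) (hf.add_of_left hdeg)
    (by rw [natDegree_add_eq_left_of_degree_lt hdeg]; omega) ?_ x (by simpa [hx, T] using ht₁)
  have hT : residue O₁ T = 0 := (residue_eq_zero_iff T).2 htm
  simpa [hfp, hT, Nat.sub_ne_zero_of_lt (hfdeg ▸ hpdeg)] using hroot

end ValuationSubring

/-- If `O₁` and `O₂` are henselian valuation rings on a field `K` and at least one of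
their residue fields is not separably closed, then `O₁` and `O₂` are comparable. -/
theorem henselian_valuation_rings_comparable_of_residue_field_not_sepClosed
    {K : Type*} [Field K] (O₁ O₂ : ValuationSubring K)
    (h₁ : HenselianLocalRing O₁) (h₂ : HenselianLocalRing O₂)
    (hres : ¬ IsSepClosed (IsLocalRing.ResidueField O₁) ∨
      ¬ IsSepClosed (IsLocalRing.ResidueField O₂)) :
    O₁ ≤ O₂ ∨ O₂ ≤ O₁ := by
  rcases hres with h | h
  · exact ValuationSubring.le_or_le_of_not_isSepClosed h
  · exact (ValuationSubring.le_or_le_of_not_isSepClosed h).symm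
end

section
/- A hilbertian field k does not admit a proper henselian valuation ring: if 𝔬 ⊊ k is a valuation ring of k that is henselian, then a contradiction follows. Concretely: if 𝔬 is a proper henselian valuation subring of k with maximal ideal m, f(X) ∈ k[X] is a separable polynomial without a zero in k such that f(k) ∩ m = ∅, and π ∈ m \ {0}, then the polynomial g(X,Y) = f(X)·Y² + f(X)·Y + π ∈ k[X,Y] has the property that for every x ∈ k, the polynomial g(x,Y) ∈ k[Y] has a root in k. -/
/-!
Put `c = f(x)`. Since `c` is never in `m`, `c⁻¹ ∈ 𝔬`, so `s = π / c ∈ m`. Then `Y² + Y + s`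
reduces to `Y(Y + 1)` modulo `m`, which has the simple root `0`; by henselianity it has a root
`a ∈ 𝔬`, and multiplying `a² + a + π / c = 0` by `c` gives `g(x, a) = 0`.
-/

open Polynomial IsLocalRing

theorem ValuationSubring.div_mem_nonunits {K : Type*} [Field K] {A : ValuationSubring K}
    {a b : K} (ha : a ∈ A.nonunits) (hb : b ∉ A.nonunits) : a / b ∈ A.nonunits := by
  rw [mem_nonunits_iff, not_lt] at *
  rw [map_div₀]
  exact (div_le_of_le_mul₀ zero_le zero_le (le_mul_of_one_le_right' hb)).trans_lt ha

theorem HenselianLocalRing.exists_sq_add_self_add_eq_zero {R : Type*} [CommRing R]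
    [HenselianLocalRing R] {s : R} (hs : s ∈ maximalIdeal R) : ∃ a : R, a ^ 2 + a + s = 0 := by
  obtain ⟨a, ha, -⟩ := HenselianLocalRing.is_henselian (X ^ 2 + X + C s) (by monicity!) 0
    (by simpa using hs) (by simp)
  exact ⟨a, by simpa using ha⟩

theorem proper_henselian_valuation_specialization_has_root_general
    {k : Type*} [Field k] (𝔬 : ValuationSubring k)
    (hhens : HenselianLocalRing 𝔬)
    (f : Polynomial k) (hnoroot : ∀ x : k, f.eval x ≠ 0)
    (hfm : ∀ x : k, ∀ hx : f.eval x ∈ 𝔬,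
      (⟨f.eval x, hx⟩ : 𝔬) ∉ IsLocalRing.maximalIdeal 𝔬)
    (π : k) (hπ𝔬 : π ∈ 𝔬)
    (hπm : (⟨π, hπ𝔬⟩ : 𝔬) ∈ IsLocalRing.maximalIdeal 𝔬) :
    ∀ x : k, ∃ y : k, f.eval x * y ^ 2 + f.eval x * y + π = 0 := by
  intro x
  have hfx : f.eval x ∉ 𝔬.nonunits :=
    𝔬.mem_nonunits_iff_exists_mem_maximalIdeal.not.mpr (not_exists.mpr (hfm x))
  have hπ : π ∈ 𝔬.nonunits := 𝔬.mem_nonunits_iff_exists_mem_maximalIdeal.mpr ⟨hπ𝔬, hπm⟩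
  obtain ⟨hs, hsm⟩ :=
    𝔬.mem_nonunits_iff_exists_mem_maximalIdeal.mp (ValuationSubring.div_mem_nonunits hπ hfx)
  obtain ⟨a, ha⟩ := HenselianLocalRing.exists_sq_add_self_add_eq_zero hsm
  refine ⟨a, ?_⟩
  have ha' : (a : k) ^ 2 + a + π / f.eval x = 0 := by
    simpa using congrArg ((↑) : 𝔬 → k) ha
  field_simp [hnoroot x] at ha'
  linear_combination ha'

/-- A hilbertian field does not admit a proper henselian valuation ring, concrete form:
if `𝔬 ⊊ k` is a henselian valuation subring of `k` with maximal ideal `m`, `f ∈ k[X]`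
is a separable polynomial without a zero in `k` such that `f(k) ∩ m = ∅`, and
`π ∈ m \ {0}`, then for every `x ∈ k` the polynomial
`g(x,Y) = f(x)·Y² + f(x)·Y + π` has a root in `k` (contradicting hilbertianity, since
`g(X,Y)` is absolutely irreducible). -/
theorem proper_henselian_valuation_specialization_has_root
    {k : Type*} [Field k] (𝔬 : ValuationSubring k) (hproper : 𝔬 ≠ ⊤)
    (hhens : HenselianLocalRing 𝔬)
    (f : Polynomial k) (hsep : f.Separable) (hnoroot : ∀ x : k, f.eval x ≠ 0)
    (hfm : ∀ x : k, ∀ hx : f.eval x ∈ 𝔬,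
      (⟨f.eval x, hx⟩ : 𝔬) ∉ IsLocalRing.maximalIdeal 𝔬)
    (π : k) (hπ0 : π ≠ 0) (hπ𝔬 : π ∈ 𝔬)
    (hπm : (⟨π, hπ𝔬⟩ : 𝔬) ∈ IsLocalRing.maximalIdeal 𝔬) :
    ∀ x : k, ∃ y : k, f.eval x * y ^ 2 + f.eval x * y + π = 0 :=
  proper_henselian_valuation_specialization_has_root_general 𝔬 hhens f hnoroot hfm π hπ𝔬 hπm
end

section
/- Let f(X) ∈ k[X] be a polynomial with no zero in k and π ∈ k nonzero. Then the polynomial g(X,Y) = f(X)·Y² + f(X)·Y + π, viewed via the substitution Y = Z⁻¹ as π·Z² + f(X)·Z + f(X), is irreducible over the algebraic closure of k as a polynomial in Z over k[X] by Eisenstein's criterion at a prime divisor of f; in particular g(X,Y) is absolutely irreducible. -/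
open Polynomial

namespace Polynomial

section Domain

variable {R : Type*} [CommRing R] [IsDomain R]

theorem isUnit_of_isUnit_reverse {p : R[X]} (h0 : p.coeff 0 ≠ 0) (hu : IsUnit p.reverse) :
    IsUnit p := by
  have hdeg : p.natDegree = 0 := by
    have := natDegree_eq_zero_of_isUnit hu
    rwa [reverse_natDegree, natTrailingDegree_eq_zero.mpr (Or.inr h0), Nat.sub_zero] at this
  rw [eq_C_of_natDegree_eq_zero hdeg] at hu ⊢
  rwa [reverse_C] at hu

theorem irreducible_of_irreducible_reverse {p : R[X]} (h0 : p.coeff 0 ≠ 0)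
    (h : Irreducible p.reverse) : Irreducible p := by
  refine ⟨fun hu => h.not_isUnit ?_, fun a b hab => ?_⟩
  · obtain ⟨r, hr, rfl⟩ := Polynomial.isUnit_iff.mp hu
    simpa using hr.map C
  · rw [hab, mul_coeff_zero] at h0
    rw [hab, reverse_mul_of_domain] at h
    exact (h.isUnit_or_isUnit rfl).imp (isUnit_of_isUnit_reverse (left_ne_zero_of_mul h0))
      (isUnit_of_isUnit_reverse (right_ne_zero_of_mul h0))

theorem irreducible_C_mul_X_sq_add_C_mul_X_add_C_of_isEisenstein {𝓟 : Ideal R}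
    (hprime : 𝓟.IsPrime) {u b a : R} (hu : IsUnit u) (hb : b ∈ 𝓟) (ha : a ∈ 𝓟)
    (ha2 : a ∉ 𝓟 ^ 2) :
    Irreducible (C u * X ^ 2 + C b * X + C a) := by
  have hdeg : (C u * X ^ 2 + C b * X + C a).natDegree = 2 := natDegree_quadratic hu.ne_zero
  refine IsEisensteinAt.irreducible ⟨?_, fun {n} hn => ?_, ?_⟩ hprime ?_ (by omega)
  · rw [leadingCoeff_quadratic hu.ne_zero]
    exact fun h => hprime.ne_top (𝓟.eq_top_of_isUnit_mem h hu)
  · rw [hdeg] at hn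
    interval_cases n <;> simpa
  · simpa
  · intro r hr
    exact isUnit_of_dvd_unit (by simpa using (C_dvd_iff_dvd_coeff r _).mp hr 2) hu

end Domain

theorem reverse_quadratic {R : Type*} [Semiring R] {a b c : R} (ha : a ≠ 0) :
    (C a * X ^ 2 + C b * X + C c).reverse = C c * X ^ 2 + C b * X + C a := by
  rw [reverse, natDegree_quadratic ha, reflect_add, reflect_add, reflect_C_mul_X_pow,
    ← pow_one X, reflect_C_mul_X_pow, reflect_C]
  simp only [revAt_le (le_refl 2), revAt_le one_le_two, Nat.sub_self, Nat.reduceSub, pow_zero,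
    pow_one, mul_one]
  abel

end Polynomial

theorem g_absolutely_irreducible_general
    {k : Type*} [Field k] (f : Polynomial k) (hdeg : 0 < f.natDegree)
    (hsep : f.Separable)
    (π : k) (hπ : π ≠ 0) :
    Irreducible
      ((Polynomial.C f * Polynomial.X ^ 2 + Polynomial.C f * Polynomial.X +
          Polynomial.C (Polynomial.C π)).map
        (Polynomial.mapRingHom (algebraMap k (AlgebraicClosure k)))) := by
  set φ := algebraMap k (AlgebraicClosure k)
  set F := f.map φ
  have hF : 0 < F.degree := by rwa [degree_map, ← natDegree_pos_iff_degree_pos]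
  obtain ⟨α, hα⟩ := IsAlgClosed.exists_root F hF.ne'
  have hπ' : φ π ≠ 0 := (map_ne_zero φ).mpr hπ
  have hmap : (C f * X ^ 2 + C f * X + C (C π)).map (mapRingHom φ) =
      C F * X ^ 2 + C F * X + C (C (φ π)) := by
    simp [F]
  rw [hmap]
  -- After `Y = Z⁻¹` the leading coefficient `φ π` is a unit and `F` is Eisenstein at `X - α`.
  refine irreducible_of_irreducible_reverse (by simpa using hπ') ?_
  rw [reverse_quadratic (ne_zero_of_degree_gt hF)]
  set 𝓟 : Ideal (AlgebraicClosure k)[X] := Ideal.span {X - C α}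
  have hF𝓟 : F ∈ 𝓟 := Ideal.mem_span_singleton.mpr (dvd_iff_isRoot.mpr hα)
  have hF𝓟sq : F ∉ 𝓟 ^ 2 := by
    rw [Ideal.span_singleton_pow, Ideal.mem_span_singleton, sq]
    exact fun h => not_isUnit_X_sub_C α (hsep.map.squarefree _ h)
  exact irreducible_C_mul_X_sq_add_C_mul_X_add_C_of_isEisenstein
    ((Ideal.span_singleton_prime (X_sub_C_ne_zero α)).mpr (prime_X_sub_C α))
    (isUnit_C.mpr hπ'.isUnit) hF𝓟 hF𝓟 hF𝓟sq

/-- Let `f ∈ k[X]` be a nonconstant separable polynomial with no zero in `k` and let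
`π ∈ k` be nonzero.  Then `g(X,Y) = f(X)·Y² + f(X)·Y + π` is absolutely irreducible:
it is irreducible as a polynomial in `Y` over `k̄[X]` (equivalently, as an element of
`k̄[X,Y]`), where `k̄` is the algebraic closure of `k`.  (This is seen via the
substitution `Y = Z⁻¹` and Eisenstein's criterion at a prime divisor of `f`.) -/
theorem g_absolutely_irreducible
    {k : Type*} [Field k] (f : Polynomial k) (hdeg : 0 < f.natDegree)
    (hsep : f.Separable) (hnoroot : ∀ x : k, f.eval x ≠ 0)
    (π : k) (hπ : π ≠ 0) :
    Irreducible
      ((Polynomial.C f * Polynomial.X ^ 2 + Polynomial.C f * Polynomial.X +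
          Polynomial.C (Polynomial.C π)).map
        (Polynomial.mapRingHom (algebraMap k (AlgebraicClosure k)))) :=
  g_absolutely_irreducible_general f hdeg hsep π hπ
end

section
/- Let (K, v) be a valued field with value group Γ, residue field k of characteristic ≠ 2. Let a₁, …, a_n ∈ O^× be units such that the residue form ⟨ā₁, …, ā_n⟩ is anisotropic over k, and let b ∈ K^× be an element whose value v(b) is not 2-divisible in Γ. Then the quadratic form ⟨a₁, …, a_n, a₁b, …, a_nb⟩ is anisotropic over the henselization, and in particular its residue-level analogue: the form ⟨ā₁,…,ā_n, ā₁β,…,ā_nβ⟩ over a valued residue extension with β of odd value is anisotropic. -/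
/-!
Scaling a nonzero vector `x` by its coordinate `x j` of largest value puts it in `O` with a unit
coordinate, so anisotropy of the residue form makes `∑ aᵢ (xᵢ / x j)²` a unit. Hence
`v (∑ aᵢ xᵢ²) = v (x j)²` is a nonzero square, and an isotropic vector of
`⟨a₁, …, a_n, a₁b, …, a_nb⟩` with `y ≠ 0` would exhibit `v b` as a quotient of squares.
-/

open IsLocalRing

namespace ValuationSubring

variable {K : Type*} [Field K] {O : ValuationSubring K} {ι : Type*} [Fintype ι] {a : ι → O}

theorem isUnit_sum_mul_sq_of_residue_anisotropic
    (hres : ∀ x : ι → ResidueField O, ∑ i, residue O (a i) * x i ^ 2 = 0 → ∀ i, x i = 0)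
    {w : ι → O} {j : ι} (hw : IsUnit (w j)) : IsUnit (∑ i, a i * w i ^ 2) := by
  rw [← residue_ne_zero_iff_isUnit] at hw ⊢
  intro h
  exact hw (hres (fun i => residue O (w i)) (by simpa only [map_sum, map_mul, map_pow] using h) j)

theorem valuation_sum_mul_sq_of_forall_le
    (hres : ∀ x : ι → ResidueField O, ∑ i, residue O (a i) * x i ^ 2 = 0 → ∀ i, x i = 0)
    {x : ι → K} {j : ι} (hxj : x j ≠ 0) (hmax : ∀ i, O.valuation (x i) ≤ O.valuation (x j)) :
    O.valuation (∑ i, (a i : K) * x i ^ 2) = O.valuation (x j) ^ 2 := by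
  have hmem : ∀ i, x i / x j ∈ O := fun i =>
    O.mem_of_valuation_le_one _ (by rw [map_div₀]; exact div_le_one_of_le₀ (hmax i) zero_le)
  let w : ι → O := fun i => ⟨x i / x j, hmem i⟩
  have hwj : w j = 1 := Subtype.ext (div_self hxj)
  have hunit := isUnit_sum_mul_sq_of_residue_anisotropic hres (w := w) (j := j) (by simp [hwj])
  have hfactor : ∑ i, (a i : K) * x i ^ 2 = x j ^ 2 * ((∑ i, a i * w i ^ 2 : O) : K) := by
    push_cast
    rw [Finset.mul_sum]
    refine Finset.sum_congr rfl fun i _ => ?_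
    simp only [w, div_pow]
    field_simp
  rw [hfactor, map_mul, (O.valuation_eq_one_iff _).1 hunit, mul_one, map_pow]

theorem exists_valuation_sum_mul_sq_eq_sq_of_ne_zero
    (hres : ∀ x : ι → ResidueField O, ∑ i, residue O (a i) * x i ^ 2 = 0 → ∀ i, x i = 0)
    {x : ι → K} (hx : x ≠ 0) :
    ∃ c ≠ 0, O.valuation (∑ i, (a i : K) * x i ^ 2) = O.valuation c ^ 2 := by
  obtain ⟨i₀, hi₀⟩ := Function.ne_iff.1 hx
  have : Nonempty ι := ⟨i₀⟩
  obtain ⟨j, hj⟩ := Finite.exists_max fun i => O.valuation (x i)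
  have hxj : x j ≠ 0 := by
    intro h
    exact hi₀ (by simpa [h] using hj i₀)
  exact ⟨x j, hxj, valuation_sum_mul_sq_of_forall_le hres hxj hj⟩

theorem sum_mul_sq_ne_zero_of_residue_anisotropic
    (hres : ∀ x : ι → ResidueField O, ∑ i, residue O (a i) * x i ^ 2 = 0 → ∀ i, x i = 0)
    {x : ι → K} (hx : x ≠ 0) : ∑ i, (a i : K) * x i ^ 2 ≠ 0 := by
  obtain ⟨c, hc, hv⟩ := exists_valuation_sum_mul_sq_eq_sq_of_ne_zero hres hx
  intro h
  rw [h, map_zero] at hv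
  exact hc ((map_eq_zero _).1 (pow_eq_zero_iff two_ne_zero |>.1 hv.symm))

theorem exists_valuation_sum_mul_sq_eq_sq
    (hres : ∀ x : ι → ResidueField O, ∑ i, residue O (a i) * x i ^ 2 = 0 → ∀ i, x i = 0)
    (x : ι → K) : ∃ c, O.valuation (∑ i, (a i : K) * x i ^ 2) = O.valuation c ^ 2 := by
  rcases eq_or_ne x 0 with rfl | hx
  · exact ⟨0, by simp⟩
  · obtain ⟨c, -, hc⟩ := exists_valuation_sum_mul_sq_eq_sq_of_ne_zero hres hx
    exact ⟨c, hc⟩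

end ValuationSubring

theorem anisotropic_of_residue_anisotropic_and_value_not_two_divisible_general
    {K : Type*} [Field K] (O : ValuationSubring K)
    {n : ℕ} (a : Fin n → O)
    (hres : ∀ x : Fin n → IsLocalRing.ResidueField O,
      ∑ i, IsLocalRing.residue O (a i) * x i ^ 2 = 0 → ∀ i, x i = 0)
    (b : K)
    (hb2 : ¬ ∃ c : K, O.valuation b = (O.valuation c) ^ 2) :
    ∀ x y : Fin n → K,
      ∑ i, (a i : K) * x i ^ 2 + b * ∑ i, (a i : K) * y i ^ 2 = 0 →
        (∀ i, x i = 0) ∧ (∀ i, y i = 0) := by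
  intro x y h
  have hy : y = 0 := by
    by_contra hy
    have hQy := ValuationSubring.sum_mul_sq_ne_zero_of_residue_anisotropic hres hy
    obtain ⟨c, hc⟩ := ValuationSubring.exists_valuation_sum_mul_sq_eq_sq hres x
    obtain ⟨d, hd⟩ := ValuationSubring.exists_valuation_sum_mul_sq_eq_sq hres y
    have hb : b = -(∑ i, (a i : K) * x i ^ 2) / ∑ i, (a i : K) * y i ^ 2 := by
      rw [eq_div_iff hQy]
      linear_combination h
    exact hb2 ⟨c / d, by rw [hb, map_div₀, Valuation.map_neg, hc, hd, map_div₀, div_pow]⟩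
  subst hy
  have hx : x = 0 := by
    by_contra hx
    exact ValuationSubring.sum_mul_sq_ne_zero_of_residue_anisotropic hres hx (by simpa using h)
  simp [hx]

/-- Let `(K, v)` be a valued field (valuation ring `O`) whose residue field has
characteristic `≠ 2`, let `a₁, …, a_n` be units of `O` such that the residue form
`⟨ā₁, …, ā_n⟩` is anisotropic over the residue field, and let `b ∈ K^×` have value
not `2`-divisible in the value group.  Then the quadratic form
`⟨a₁, …, a_n, a₁b, …, a_nb⟩` is anisotropic over `K`. -/
theorem anisotropic_of_residue_anisotropic_and_value_not_two_divisible
    {K : Type*} [Field K] (O : ValuationSubring K)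
    (hchar : (2 : IsLocalRing.ResidueField O) ≠ 0)
    {n : ℕ} (a : Fin n → O) (ha : ∀ i, IsUnit (a i))
    (hres : ∀ x : Fin n → IsLocalRing.ResidueField O,
      ∑ i, IsLocalRing.residue O (a i) * x i ^ 2 = 0 → ∀ i, x i = 0)
    (b : K) (hb : b ≠ 0)
    (hb2 : ¬ ∃ c : K, O.valuation b = (O.valuation c) ^ 2) :
    ∀ x y : Fin n → K,
      ∑ i, (a i : K) * x i ^ 2 + b * ∑ i, (a i : K) * y i ^ 2 = 0 →
        (∀ i, x i = 0) ∧ (∀ i, y i = 0) :=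
  anisotropic_of_residue_anisotropic_and_value_not_two_divisible_general O a hres b hb2
end

section
/- Let K₁ be a field existentially closed in a field K₂, and let O₂ be a henselian valuation ring of K₂. Then O₂ ∩ K₁ is a henselian valuation ring of K₁. -/
/-!
`O₁ = O₂ ∩ K₁` sits in `O₂` via a local homomorphism, so Hensel's lemma for `O₁` follows from
Hensel's lemma for `O₂` once every root in `O₂` of a monic polynomial over `O₁` lies in `O₁`.
Such a root is algebraic over `K₁`, and its minimal polynomial has a root in `K₂`, hence, by
existential closedness, a root in `K₁`; being irreducible, it is linear, so the root lies in `K₁`.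
-/

open FirstOrder FirstOrder.Ring Language

open Polynomial IsLocalRing

/-- `K₁` is existentially closed in `K₂` (via the embedding `f`). -/
def IsExistentiallyClosedIn {K₁ K₂ : Type*} [Field K₁] [Field K₂]
    [CompatibleRing K₁] [CompatibleRing K₂] (f : K₁ →+* K₂) : Prop :=
  ∀ (p q : ℕ) (χ : Language.ring.BoundedFormula (Fin p) q), χ.IsQF →
    ∀ v : Fin p → K₁, χ.exs.Realize (f ∘ v) → χ.exs.Realize v

/-- `∑ i, aᵢ * x ^ i = 0`, with free variables `a₀, …, aₙ` and bound variable `x`. -/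
noncomputable def polynomialEqZero (n : ℕ) : Language.ring.BoundedFormula (Fin (n + 1)) 1 :=
  termOfFreeCommRing (∑ i : Fin (n + 1),
    FreeCommRing.of (Sum.inl i) * FreeCommRing.of (Sum.inr 0) ^ (i : ℕ)) =' 0

theorem realize_exs_polynomialEqZero {K : Type*} [CommRing K] [CompatibleRing K] {n : ℕ}
    {P : K[X]} (hP : P.natDegree ≤ n) :
    (polynomialEqZero n).exs.Realize (fun i => P.coeff i) ↔ ∃ x, P.IsRoot x := by
  have heval (x : K) : ∑ i : Fin (n + 1), P.coeff i * x ^ (i : ℕ) = P.eval x := by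
    rw [eval_eq_sum]
    exact sum_fin (fun e a => a * x ^ e) (fun _ => zero_mul _)
      (degree_le_natDegree.trans_lt (WithBot.coe_lt_coe.2 (Nat.lt_succ_of_le hP)))
  simp only [polynomialEqZero, BoundedFormula.realize_exs, BoundedFormula.realize_bdEqual,
    realize_termOfFreeCommRing, map_sum, map_mul, map_pow, FreeCommRing.lift_of, Sum.elim_inl,
    Sum.elim_inr, realize_zero, heval]
  exact ⟨fun ⟨xs, h⟩ => ⟨xs 0, h⟩, fun ⟨x, h⟩ => ⟨fun _ => x, h⟩⟩

theorem IsExistentiallyClosedIn.exists_isRoot {K₁ K₂ : Type*} [Field K₁] [Field K₂]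
    [CompatibleRing K₁] [CompatibleRing K₂] {f : K₁ →+* K₂} (hec : IsExistentiallyClosedIn f)
    {P : K₁[X]} {x : K₂} (hx : (P.map f).IsRoot x) : ∃ y, P.IsRoot y := by
  rw [← realize_exs_polynomialEqZero le_rfl]
  refine hec _ _ (polynomialEqZero _) (BoundedFormula.IsAtomic.equal _ _).isQF _ ?_
  have hcoeff : f ∘ (fun i : Fin (P.natDegree + 1) => P.coeff i) =
      fun i : Fin _ => (P.map f).coeff i := by
    ext; simp [coeff_map]
  rw [hcoeff, realize_exs_polynomialEqZero natDegree_map_le]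
  exact ⟨x, hx⟩

theorem RingHom.mem_range_of_isIntegralElem {K L : Type*} [Field K] [Field L] (f : K →+* L)
    (hroot : ∀ (P : K[X]) (x : L), (P.map f).IsRoot x → ∃ y, P.IsRoot y)
    {x : L} (hx : f.IsIntegralElem x) : x ∈ f.range := by
  let := f.toAlgebra
  obtain ⟨y, hy⟩ := hroot (minpoly K x) x (by rw [IsRoot, eval_map]; exact minpoly.aeval K x)
  change x ∈ (algebraMap K L).range
  rw [← minpoly.natDegree_eq_one_iff, natDegree_eq_of_degree_eq_some
    (degree_eq_one_of_irreducible_of_root (minpoly.irreducible hx) hy)]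
  rfl

theorem HenselianLocalRing.of_injective {R S : Type*} [CommRing R] [CommRing S]
    [HenselianLocalRing S] (φ : R →+* S) [IsLocalHom φ] (hφ : Function.Injective φ)
    (hint : ∀ a : S, φ.IsIntegralElem a → a ∈ φ.range) : HenselianLocalRing R := by
  have := φ.domain_isLocalRing
  have hmem (x : R) : φ x ∈ maximalIdeal S ↔ x ∈ maximalIdeal R := map_mem_nonunits_iff φ x
  have hmap (P : R[X]) (x : R) : (P.map φ).eval (φ x) = φ (P.eval x) := by
    rw [eval_map, eval₂_at_apply]
  refine ⟨fun F hF a₀ h₀ hu => ?_⟩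
  obtain ⟨a, ha, hcong⟩ := HenselianLocalRing.is_henselian (F.map φ) (hF.map φ) (φ a₀)
    (by rwa [hmap, hmem]) (by rw [derivative_map, hmap]; exact hu.map φ)
  obtain ⟨b, rfl⟩ := hint a ⟨F, hF, by rwa [← eval_map]⟩
  refine ⟨b, hφ ?_, ?_⟩
  · rw [← hmap, map_zero]
    exact ha
  · rwa [← hmem, map_sub]

namespace ValuationSubring

variable {K L : Type*} [Field K] [Field L] (O : ValuationSubring L) (f : K →+* L)

def restrictComap : O.comap f →+* O :=
  f.restrict (O.comap f) O fun _ hx => hx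

theorem restrictComap_injective : Function.Injective (O.restrictComap f) :=
  fun _ _ h => Subtype.ext (f.injective (congrArg Subtype.val h))

instance isLocalHom_restrictComap : IsLocalHom (O.restrictComap f) := by
  refine ⟨fun x => not_imp_not.1 fun hx => ?_⟩
  rw [← _root_.mem_nonunits_iff, ← mem_maximalIdeal, ← coe_mem_nonunits_iff,
    mem_nonunits_iff_or] at hx ⊢
  change f x = 0 ∨ (f x)⁻¹ ∉ O
  rwa [map_eq_zero, ← map_inv₀]

variable {f} in
theorem mem_range_restrictComap (hf : ∀ x : L, f.IsIntegralElem x → x ∈ f.range)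
    {a : O} (ha : (O.restrictComap f).IsIntegralElem a) : a ∈ (O.restrictComap f).range := by
  have hK : (f.comp (O.comap f).subtype).IsIntegralElem a := ha.map O.subtype
  obtain ⟨b, hb⟩ := hf a hK.of_comp
  exact ⟨⟨b, by simp [hb]⟩, Subtype.ext hb⟩

end ValuationSubring

/-- Let `K₁` be existentially closed in `K₂` and `O₂` a henselian valuation ring of
`K₂`. Then the restriction `O₂ ∩ K₁` is a henselian valuation ring of `K₁`. -/
theorem restriction_of_henselian_valuation_to_ec_subfield_henselian
    {K₁ K₂ : Type*} [Field K₁] [Field K₂]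
    [CompatibleRing K₁] [CompatibleRing K₂] (f : K₁ →+* K₂)
    (hec : IsExistentiallyClosedIn f)
    (O₂ : ValuationSubring K₂) (hhens : HenselianLocalRing O₂) :
    HenselianLocalRing (O₂.comap f) :=
  HenselianLocalRing.of_injective (O₂.restrictComap f) (O₂.restrictComap_injective f)
    fun _ ha => O₂.mem_range_restrictComap
      (fun _ hx => f.mem_range_of_isIntegralElem (fun _ _ hP => hec.exists_isRoot hP) hx) ha
end

section
/- Let G be a linearly ordered abelian group. The statement 'G has a nontrivial convex 2-divisible subgroup' is equivalent to: there exists γ ∈ G with 0 < γ such that for all δ with 0 ≤ δ ≤ γ there exists ε with δ = 2ε. -/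
/-!
If `Δ` is convex, 2-divisible and contains `x ≠ 0`, then `γ = |x|` works. Conversely, divisibility
on `[0, γ]` propagates by induction to every `[0, n • γ]`, hence to the convex subgroup generated
by `γ`: the archimedean closed ball `{δ | ∃ n, |δ| ≤ n • γ}`. Since `|ε| ≤ |2 • ε|`, a half of a
member of that ball stays in it, so the ball is 2-divisible.
-/

section

variable {G : Type*} [AddCommGroup G] [LinearOrder G] [IsOrderedAddMonoid G]

theorem exists_nsmul_eq_of_nonneg_of_le_nsmul {k : ℕ} {γ : G} (hγ : 0 ≤ γ)
    (h : ∀ δ : G, 0 ≤ δ → δ ≤ γ → ∃ ε : G, δ = k • ε) (n : ℕ) {δ : G} (hδ₀ : 0 ≤ δ)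
    (hδ : δ ≤ n • γ) : ∃ ε : G, δ = k • ε := by
  induction n generalizing δ with
  | zero => exact ⟨0, by rw [smul_zero, le_antisymm (by simpa using hδ) hδ₀]⟩
  | succ n ih =>
    rcases le_or_gt δ γ with hδγ | hγδ
    · exact h δ hδ₀ hδγ
    · obtain ⟨ε₀, hε₀⟩ := h γ hγ le_rfl
      obtain ⟨ε, hε⟩ := ih (sub_nonneg.mpr hγδ.le) (sub_le_iff_le_add.mpr (succ_nsmul γ n ▸ hδ))
      exact ⟨ε + ε₀, by rw [smul_add, ← hε, ← hε₀, sub_add_cancel]⟩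

namespace ArchimedeanClass

theorem closedBallAddSubgroup_mk_ne_bot {γ : G} (hγ : γ ≠ 0) :
    closedBallAddSubgroup (mk γ) ≠ ⊥ := fun hbot =>
  hγ (AddSubgroup.mem_bot.mp (hbot ▸ mem_closedBallAddSubgroup_iff.mpr le_rfl))

theorem mem_closedBallAddSubgroup_of_abs_le {c : ArchimedeanClass G} {x δ : G}
    (hx : x ∈ closedBallAddSubgroup c) (hδ : |δ| ≤ |x|) : δ ∈ closedBallAddSubgroup c := by
  rw [mem_closedBallAddSubgroup_iff] at hx ⊢
  exact hx.trans (mk_le_mk_of_abs hδ)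

theorem exists_nsmul_eq_of_mem_closedBallAddSubgroup {k : ℕ} (hk : k ≠ 0) {γ : G} (hγ : 0 ≤ γ)
    (h : ∀ δ : G, 0 ≤ δ → δ ≤ γ → ∃ ε : G, δ = k • ε) {δ : G}
    (hδ : δ ∈ closedBallAddSubgroup (mk γ)) :
    ∃ ε ∈ closedBallAddSubgroup (mk γ), δ = k • ε := by
  obtain ⟨n, hn⟩ := mk_le_mk.mp (mem_closedBallAddSubgroup_iff.mp hδ)
  obtain ⟨ε, hε⟩ :=
    exists_nsmul_eq_of_nonneg_of_le_nsmul hγ h n (abs_nonneg δ) (abs_of_nonneg hγ ▸ hn)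
  have hε_mem : ε ∈ closedBallAddSubgroup (mk γ) := by
    refine mem_closedBallAddSubgroup_of_abs_le (x := δ) hδ ?_
    rw [← abs_abs δ, hε, abs_nsmul]
    exact le_self_nsmul (abs_nonneg ε) hk
  rcases abs_choice δ with hδ_abs | hδ_abs
  · exact ⟨ε, hε_mem, by rw [← hδ_abs, hε]⟩
  · exact ⟨-ε, neg_mem hε_mem, by rw [smul_neg, ← hε, hδ_abs, neg_neg]⟩

end ArchimedeanClass

end

/-- Let `G` be a linearly ordered abelian group.  `G` has a nontrivial convex
`2`-divisible subgroup if and only if there exists `γ > 0` in `G` such that every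
`δ` with `0 ≤ δ ≤ γ` is of the form `δ = 2ε`. -/
theorem exists_nontrivial_convex_two_divisible_subgroup_iff
    {G : Type*} [AddCommGroup G] [LinearOrder G] [IsOrderedAddMonoid G] :
    (∃ Δ : AddSubgroup G, Δ ≠ ⊥ ∧
        (∀ γ ∈ Δ, ∀ δ : G, 0 ≤ δ → δ ≤ γ → δ ∈ Δ) ∧
        (∀ δ ∈ Δ, ∃ ε ∈ Δ, δ = 2 • ε)) ↔
      (∃ γ : G, 0 < γ ∧ ∀ δ : G, 0 ≤ δ → δ ≤ γ → ∃ ε : G, δ = 2 • ε) := by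
  constructor
  · rintro ⟨Δ, hΔ, hconvex, hdiv⟩
    obtain ⟨x, hxΔ, hx⟩ := Δ.bot_or_exists_ne_zero.resolve_left hΔ
    refine ⟨|x|, abs_pos.mpr hx, fun δ hδ₀ hδ => ?_⟩
    obtain ⟨ε, -, hε⟩ := hdiv δ (hconvex |x| (abs_mem_iff.mpr hxΔ) δ hδ₀ hδ)
    exact ⟨ε, hε⟩
  · rintro ⟨γ, hγ, h⟩
    refine ⟨ArchimedeanClass.closedBallAddSubgroup (.mk γ), ?_, fun x hx δ hδ₀ hδ => ?_,
      fun δ => ArchimedeanClass.exists_nsmul_eq_of_mem_closedBallAddSubgroup two_ne_zero hγ.le h⟩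
    · exact ArchimedeanClass.closedBallAddSubgroup_mk_ne_bot hγ.ne'
    · exact ArchimedeanClass.mem_closedBallAddSubgroup_of_abs_le hx
        (by rw [abs_of_nonneg hδ₀]; exact hδ.trans (le_abs_self x))
end

section
/- Let k be a field and K = k((t)) the field of formal Laurent series with valuation ring O = k[[t]]. Suppose O₂ is a henselian valuation ring on a field K₂ ⊇ K, K is existentially closed in K₂, and the residue field k of O is neither separably closed nor carries a proper henselian valuation. If O₂ ∩ K is a henselian valuation ring of K comparable with k[[t]], then k[[t]] ⊆ O₂. -/
open FirstOrder FirstOrder.Ring Language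

section Hens

open Polynomial IsLocalRing

/-- The image of a henselian local ring under a surjective ring hom (with nontrivial
codomain) is again a henselian local ring. -/
theorem henselianLocalRing_of_surjective' {R S : Type*} [CommRing R] [CommRing S]
    [HenselianLocalRing R] [Nontrivial S] (φ : R →+* S) (hφ : Function.Surjective φ) :
    HenselianLocalRing S := by
  haveI : IsLocalRing S := IsLocalRing.of_surjective' φ hφ
  have hker : RingHom.ker φ ≤ maximalIdeal R := by
    apply le_maximalIdeal
    intro h
    have h1 : (1 : R) ∈ RingHom.ker φ := h ▸ Submodule.mem_top
    rw [RingHom.mem_ker, map_one] at h1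
    exact one_ne_zero h1
  have hunit : ∀ x : R, IsUnit (φ x) → IsUnit x := by
    intro x hx
    obtain ⟨u, hu⟩ := hx
    obtain ⟨y, hy⟩ := hφ (↑u⁻¹)
    have hxy1 : φ (x * y) = 1 := by rw [map_mul, hy, ← hu]; exact u.mul_inv
    have hmem : x * y - 1 ∈ maximalIdeal R := by
      apply hker; rw [RingHom.mem_ker, map_sub, hxy1, map_one, sub_self]
    have hxy : IsUnit (x * y) := by
      by_contra hcon
      rw [← mem_nonunits_iff, ← IsLocalRing.mem_maximalIdeal] at hcon
      have : (1 : R) ∈ maximalIdeal R := by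
        have := Submodule.sub_mem _ hcon hmem
        simpa using this
      exact (maximalIdeal.isMaximal R).ne_top (Ideal.eq_top_of_isUnit_mem _ this isUnit_one)
    exact isUnit_of_mul_isUnit_left hxy
  have hmm : ∀ x : R, x ∈ maximalIdeal R → φ x ∈ maximalIdeal S := by
    intro x hx
    rw [IsLocalRing.mem_maximalIdeal, mem_nonunits_iff]
    intro h
    exact (IsLocalRing.mem_maximalIdeal x).mp hx (hunit x h)
  constructor
  intro g hg b₀ h₁ h₂
  obtain ⟨G, hG, -, hGm⟩ := lifts_and_degree_eq_and_monic
    ((mem_lifts g).mpr (Polynomial.map_surjective φ hφ g)) hg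
  obtain ⟨a₀, rfl⟩ := hφ b₀
  have hev : ∀ (c : R) (p : R[X]), φ (p.eval c) = (p.map φ).eval (φ c) := by
    intro c p; rw [eval_map, eval₂_at_apply]
  have h₁' : G.eval a₀ ∈ maximalIdeal R := by
    by_contra hcon
    rw [IsLocalRing.mem_maximalIdeal, mem_nonunits_iff, not_not] at hcon
    have : IsUnit (g.eval (φ a₀)) := by rw [← hG, ← hev]; exact hcon.map φ
    exact (IsLocalRing.mem_maximalIdeal _).mp h₁ this
  have h₂' : IsUnit (G.derivative.eval a₀) := by
    apply hunit
    rw [hev, ← derivative_map, hG]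
    exact h₂
  obtain ⟨a, ha, hmem⟩ := HenselianLocalRing.is_henselian G hGm a₀ h₁' h₂'
  refine ⟨φ a, ?_, ?_⟩
  · have : φ (G.eval a) = g.eval (φ a) := by rw [hev, hG]
    rw [IsRoot, ← this, ha.eq_zero, map_zero]
  · rw [← map_sub]
    exact hmm _ hmem

end Hens

/-- The `t`-adic valuation subring `k[[t]]` of the Laurent series field `K = k((t))`. -/
noncomputable def laurentValuationSubring (k : Type*) [Field k] :
    ValuationSubring (LaurentSeries k) :=
  (Valued.v : Valuation (LaurentSeries k) (WithZero (Multiplicative ℤ))).valuationSubring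

section Residue

variable (k : Type*) [Field k]

theorem mem_laurentValuationSubring_iff (x : LaurentSeries k) :
    x ∈ laurentValuationSubring k ↔ ∃ F : PowerSeries k, ↑F = x := by
  rw [laurentValuationSubring, Valuation.mem_valuationSubring_iff,
    LaurentSeries.val_le_one_iff_eq_coe]

theorem hahnC_mem_laurentValuationSubring (a : k) :
    (HahnSeries.C a : LaurentSeries k) ∈ laurentValuationSubring k :=
  (mem_laurentValuationSubring_iff k _).mpr
    ⟨PowerSeries.C a, HahnSeries.ofPowerSeries_C a⟩

/-- The residue map `k[[t]] → k` sending a power series to its constant coefficient. -/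
noncomputable def laurentResidue : (laurentValuationSubring k) →+* k where
  toFun x := (x : LaurentSeries k).coeff 0
  map_one' := by simp
  map_zero' := by simp
  map_add' x y := by simp [HahnSeries.coeff_add]
  map_mul' x y := by
    obtain ⟨F, hF⟩ := (mem_laurentValuationSubring_iff k _).mp x.2
    obtain ⟨G, hG⟩ := (mem_laurentValuationSubring_iff k _).mp y.2
    show ((x * y : laurentValuationSubring k) : LaurentSeries k).coeff 0
        = (x : LaurentSeries k).coeff 0 * (y : LaurentSeries k).coeff 0
    have hc : ((x * y : laurentValuationSubring k) : LaurentSeries k)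
        = (x : LaurentSeries k) * (y : LaurentSeries k) := rfl
    rw [hc, ← hF, ← hG, ← map_mul]
    have h0 : (((0 : ℕ) : ℤ)) = (0 : ℤ) := by norm_num
    rw [← h0, HahnSeries.ofPowerSeries_apply_coeff, HahnSeries.ofPowerSeries_apply_coeff,
      HahnSeries.ofPowerSeries_apply_coeff]
    simp [PowerSeries.coeff_zero_eq_constantCoeff]

@[simp]
theorem laurentResidue_C (a : k) (h : (HahnSeries.C a : LaurentSeries k) ∈
    laurentValuationSubring k) : laurentResidue k ⟨_, h⟩ = a := by
  simp [laurentResidue, HahnSeries.C_apply, HahnSeries.coeff_single_same]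

end Residue

/-- Let `k` be a field that is not separably closed and admits no proper henselian
valuation ring, `K = k((t))` with its `t`-adic valuation ring `O = k[[t]]`, and let
`O₂` be a henselian valuation ring of a field `K₂ ⊇ K` with `K` existentially closed
in `K₂`.  If `O₂ ∩ K` is a henselian valuation ring of `K` comparable with `k[[t]]`,
then `k[[t]] ⊆ O₂`. -/
theorem laurent_valuation_ring_le_of_ec
    {k : Type*} [Field k]
    (hnsc : ¬ IsSepClosed k)
    (hnohens : ∀ 𝔬 : ValuationSubring k, HenselianLocalRing 𝔬 → 𝔬 = ⊤)
    {K₂ : Type*} [Field K₂]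
    [CompatibleRing (LaurentSeries k)] [CompatibleRing K₂]
    (f : LaurentSeries k →+* K₂) (hec : IsExistentiallyClosedIn f)
    (O₂ : ValuationSubring K₂) (hhens₂ : HenselianLocalRing O₂)
    (hhensres : HenselianLocalRing (O₂.comap f))
    (hcomp : O₂.comap f ≤ laurentValuationSubring k ∨
      laurentValuationSubring k ≤ O₂.comap f) :
    laurentValuationSubring k ≤ O₂.comap f := by
  rcases hcomp with h | h
  · -- the hard case: `O := O₂.comap f ⊆ k[[t]]`, show they are equal
    set O' := laurentValuationSubring k with hO'def
    set Oc := O₂.comap f with hOcdef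
    set ψ := laurentResidue k with hψdef
    have hsub : Oc.toSubring ≤ O'.toSubring := fun x hx => h hx
    -- the image of `Oc` in the residue field `k`
    set S : Subring O' := Oc.toSubring.comap O'.toSubring.subtype with hSdef
    set R : Subring k := S.map ψ with hRdef
    -- it is a valuation subring
    have hmoi : ∀ a : k, a ∈ R ∨ a⁻¹ ∈ R := by
      intro a
      rcases eq_or_ne a 0 with rfl | ha
      · exact Or.inl (zero_mem R)
      rcases Oc.mem_or_inv_mem (HahnSeries.C a : LaurentSeries k) with hc | hc
      · left
        refine ⟨⟨_, hahnC_mem_laurentValuationSubring k a⟩, hc, laurentResidue_C k a _⟩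
      · right
        have hC : (HahnSeries.C a : LaurentSeries k)⁻¹ = (HahnSeries.C a⁻¹ : LaurentSeries k) :=
          inv_eq_of_mul_eq_one_right (by rw [← map_mul, mul_inv_cancel₀ ha, map_one])
        rw [hC] at hc
        refine ⟨⟨_, hahnC_mem_laurentValuationSubring k a⁻¹⟩, hc, laurentResidue_C k a⁻¹ _⟩
    set 𝔬 : ValuationSubring k := ⟨R, hmoi⟩ with h𝔬def
    -- the restriction of `ψ` to `Oc` surjects onto `𝔬`
    have hmem : ∀ x : Oc, ψ (Subring.inclusion hsub x) ∈ R := by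
      intro x
      exact ⟨Subring.inclusion hsub x, x.2, rfl⟩
    set φ : Oc →+* R := (ψ.comp (Subring.inclusion hsub)).codRestrict R (hmem) with hφdef
    have hsurj : Function.Surjective φ := by
      rintro ⟨-, y, hyS, rfl⟩
      exact ⟨⟨(y : LaurentSeries k), hyS⟩, Subtype.ext rfl⟩
    haveI : HenselianLocalRing Oc := hhensres
    have hhens𝔬 : HenselianLocalRing 𝔬 := henselianLocalRing_of_surjective' φ hsurj
    have htop := hnohens 𝔬 hhens𝔬
    -- conclude `O' ≤ Oc`
    intro x hx
    have hxa : ψ ⟨x, hx⟩ ∈ R := by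
      have : (ψ ⟨x, hx⟩) ∈ (⊤ : ValuationSubring k) := trivial
      rwa [← htop] at this
    obtain ⟨y, hyS, hy⟩ := hxa
    set z : O' := ⟨x, hx⟩ - y with hzdef
    have hz0 : ψ z = 0 := by rw [hzdef, ψ.map_sub, hy, sub_self]
    have hzO : (z : LaurentSeries k) ∈ Oc := by
      by_contra hcon
      have hne : (z : LaurentSeries k) ≠ 0 := by
        intro h0
        exact hcon (h0 ▸ zero_mem Oc)
      rcases Oc.mem_or_inv_mem (z : LaurentSeries k) with hc | hc
      · exact hcon hc
      · have hinv : ((z : LaurentSeries k))⁻¹ ∈ O' := h hc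
        have hprod : z * ⟨_, hinv⟩ = 1 := Subtype.ext (mul_inv_cancel₀ hne)
        have := congrArg ψ hprod
        rw [ψ.map_mul, hz0, zero_mul, ψ.map_one] at this
        exact zero_ne_one this
    have hyO : ((y : O') : LaurentSeries k) ∈ Oc := hyS
    have hxeq : x = (z : LaurentSeries k) + ((y : O') : LaurentSeries k) := by
      rw [hzdef]
      push_cast
      ring
    rw [hxeq]
    exact add_mem hzO hyO
  · exact h
end
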